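/- Let k be a field, B = kQ/I a bound quiver algebra, F a set of new arrows with no relative cycles, and Y a finite-dimensional B_F-bimodule. Then the map H_1(B, Y) → H_1(B_F, Y) on first Hochschild homology induced by the inclusion B ⊆ B_F (restricting Y to a B-bimodule) is injective. -/

import Mathlib

/-
  Formalization of statements from:
  "The first Hochschild (co)homology when adding arrows to a bound quiver algebra"
  by C. Cibils, M. Lanzilotta, E. N. Marcos, S. Schroll, A. Solotar.
-/

set_option linter.unusedSectionVars false
set_option linter.unusedVariables false
set_option maxSynthPendingDepth 3

open CategoryTheory

noncomputable section

namespace QP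

open MulOpposite

/-- The defining relations of the path algebra of the quiver with vertex set `V`,
arrow set `E`, source map `s` and target map `t`, as a quotient of the free algebra
on `V ⊕ E`: the vertices form a complete set of orthogonal idempotents and each arrow `a`
satisfies `t(a)·a = a = a·s(a)`. -/
inductive PRel (k V E : Type) [CommRing k] [Fintype V] [DecidableEq V] (s t : E → V) :
    FreeAlgebra k (V ⊕ E) → FreeAlgebra k (V ⊕ E) → Prop
  | idem (i j : V) : PRel k V E s t
      (FreeAlgebra.ι k (Sum.inl i) * FreeAlgebra.ι k (Sum.inl j))
      (if i = j then FreeAlgebra.ι k (Sum.inl i) else 0)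
  | unit : PRel k V E s t (∑ i : V, FreeAlgebra.ι k (Sum.inl i)) 1
  | arrow_left (a : E) : PRel k V E s t
      (FreeAlgebra.ι k (Sum.inl (t a)) * FreeAlgebra.ι k (Sum.inr a))
      (FreeAlgebra.ι k (Sum.inr a))
  | arrow_right (a : E) : PRel k V E s t
      (FreeAlgebra.ι k (Sum.inr a) * FreeAlgebra.ι k (Sum.inl (s a)))
      (FreeAlgebra.ι k (Sum.inr a))

/-- The path algebra `kQ` of the finite quiver `Q = (V, E, s, t)`. -/
abbrev PathAlg (k V E : Type) [CommRing k] [Fintype V] [DecidableEq V] (s t : E → V) : Type :=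
  RingQuot (PRel k V E s t)

variable (k : Type) [CommRing k]
variable {V E : Type} [Fintype V] [DecidableEq V]

/-- The vertex `i`, as an element of the path algebra (an idempotent). -/
def vtx (s t : E → V) (i : V) : PathAlg k V E s t :=
  RingQuot.mkAlgHom k (PRel k V E s t) (FreeAlgebra.ι k (Sum.inl i))

/-- The arrow `a`, as an element of the path algebra. -/
def arr (s t : E → V) (a : E) : PathAlg k V E s t :=
  RingQuot.mkAlgHom k (PRel k V E s t) (FreeAlgebra.ι k (Sum.inr a))

/-- A list of arrows `[aₙ, ..., a₁]` is composable when `s aᵢ₊₁ = t aᵢ` for all `i`. -/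
def Composable (s t : E → V) : List E → Prop :=
  List.Chain' (fun p q => s p = t q)

/-- The product `aₙ ⋯ a₁` in the path algebra of a list of arrows `[aₙ, ..., a₁]`;
for a composable list this is the corresponding path. -/
def pathProd (s t : E → V) (l : List E) : PathAlg k V E s t :=
  (l.map (arr k s t)).prod

/-- The two-sided ideal of the path algebra generated by the paths of length `m`. -/
def pathsIdeal (s t : E → V) (m : ℕ) : TwoSidedIdeal (PathAlg k V E s t) :=
  TwoSidedIdeal.span
    {x | ∃ l : List E, l.length = m ∧ Composable s t l ∧ x = pathProd k s t l}

/-- A two-sided ideal `I` of the path algebra is admissible when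
`⟨Q_n⟩ ⊆ I ⊆ ⟨Q_2⟩` for some `n ≥ 2`. -/
def IsAdmissible (s t : E → V) (I : TwoSidedIdeal (PathAlg k V E s t)) : Prop :=
  ∃ n : ℕ, 2 ≤ n ∧ pathsIdeal k s t n ≤ I ∧ I ≤ pathsIdeal k s t 2

/-- The bound quiver algebra `kQ/I`. -/
abbrev BQA (s t : E → V) (I : TwoSidedIdeal (PathAlg k V E s t)) : Type :=
  RingQuot (fun x y : PathAlg k V E s t => x - y ∈ I)

/-- The quotient map `kQ → kQ/I`. -/
def bqaMk (s t : E → V) (I : TwoSidedIdeal (PathAlg k V E s t)) :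
    PathAlg k V E s t →ₐ[k] BQA k s t I :=
  RingQuot.mkAlgHom k _

/-- The image of a vertex in the bound quiver algebra. -/
def bv (s t : E → V) (I : TwoSidedIdeal (PathAlg k V E s t)) (i : V) : BQA k s t I :=
  bqaMk k s t I (vtx k s t i)

/-- The subspace `e·A·f` of an algebra `A`, for elements `e f : A`
(typically idempotents). -/
def corner (A : Type) [Ring A] [Algebra k A] (e f : A) : Submodule k A :=
  Submodule.span k {x | ∃ c : A, x = e * c * f}

/-- `yBx ≠ 0`, for vertices `y x` of the quiver of the bound quiver algebra `B = kQ/I`. -/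
def cornerNZ (s t : E → V) (I : TwoSidedIdeal (PathAlg k V E s t)) (y x : V) : Prop :=
  corner k (BQA k s t I) (bv k s t I y) (bv k s t I x) ≠ ⊥

section NewArrows

variable (s t : E → V) {F : Type} [Fintype F] (sF tF : F → V)
variable (I : TwoSidedIdeal (PathAlg k V E s t))

/-- A relative path `(aₙ, ..., a₁)` (recorded as the list `[aₙ, ..., a₁]` of new arrows):
a nonempty sequence of new arrows such that `s(aᵢ₊₁)·B·t(aᵢ) ≠ 0` for all `i`. -/
def IsRelPath (l : List F) : Prop :=
  l ≠ [] ∧ l.Chain' (fun p q => cornerNZ k s t I (sF p) (tF q))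

/-- The source of a relative path: the source of its first arrow `a₁`. -/
def relSource (l : List F) (h : l ≠ []) : V := sF (l.getLast h)

/-- The target of a relative path: the target of its last arrow `aₙ`. -/
def relTarget (l : List F) (h : l ≠ []) : V := tF (l.head h)

/-- The dimension of a relative path `γ = (aₙ, ..., a₁)`:
`∏ᵢ dim_k s(aᵢ₊₁)·B·t(aᵢ)`. -/
def relDim (l : List F) : ℕ :=
  ((l.zip l.tail).map fun pq =>
    Module.finrank k
      (corner k (BQA k s t I) (bv k s t I (sF pq.1)) (bv k s t I (tF pq.2)))).prod

/-- A relative cycle: a relative path `γ` with `s(γ)·B·t(γ) ≠ 0`. -/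
def IsRelCycle (l : List F) : Prop :=
  ∃ h : IsRelPath k s t sF tF I l,
    cornerNZ k s t I (relSource sF l h.1) (relTarget tF l h.1)

/-- There are no relative cycles. -/
def NoRelCycles : Prop := ∀ l : List F, ¬ IsRelCycle k s t sF tF I l

/-- The type of relative paths. -/
def RelPathT : Type := {l : List F // IsRelPath k s t sF tF I l}

/-- An extended relative path: either a pair of vertices `(y, x)` with `yBx ≠ 0`
(length 0, recorded as `(y, [], x)`), or a triple `(y, γ, x)` with `γ` a relative path,
`y·B·t(γ) ≠ 0` and `s(γ)·B·x ≠ 0`. -/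
def IsExtRelPath : V × List F × V → Prop
  | (y, [], x) => cornerNZ k s t I y x
  | (y, a :: l, x) =>
      IsRelPath k s t sF tF I (a :: l) ∧
      cornerNZ k s t I y (relTarget tF (a :: l) (List.cons_ne_nil a l)) ∧
      cornerNZ k s t I (relSource sF (a :: l) (List.cons_ne_nil a l)) x

/-- The dimension of an extended relative path. -/
def extDim : V × List F × V → ℕ
  | (y, [], x) => Module.finrank k (corner k (BQA k s t I) (bv k s t I y) (bv k s t I x))
  | (y, a :: l, x) =>
      Module.finrank k (corner k (BQA k s t I) (bv k s t I y)
          (bv k s t I (relTarget tF (a :: l) (List.cons_ne_nil a l)))) *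
        relDim k s t sF tF I (a :: l) *
        Module.finrank k (corner k (BQA k s t I)
          (bv k s t I (relSource sF (a :: l) (List.cons_ne_nil a l))) (bv k s t I x))

/-- The source of an extended relative path `(y, γ, x)` is `x`. -/
def extSource (w : V × List F × V) : V := w.2.2

/-- The target of an extended relative path `(y, γ, x)` is `y`. -/
def extTarget (w : V × List F × V) : V := w.1

/-- The set `F ∥ W⋆` of pairs `(a, ω)` of a new arrow `a` and an extended relative path `ω`
which is parallel to `a`, i.e. `s(a) = s(ω)` and `t(a) = t(ω)`. -/
def FparW : Type :=
  {p : F × (V × List F × V) //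
    IsExtRelPath k s t sF tF I p.2 ∧ sF p.1 = extSource p.2 ∧ tF p.1 = extTarget p.2}

/-- The quiver `Q_F` obtained by adding the new arrows `F` has arrow set `E ⊕ F`,
source map `Sum.elim s sF` and target map `Sum.elim t tF`.  This is the canonical
algebra morphism `kQ → kQ_F`. -/
def extendPath : PathAlg k V E s t →ₐ[k] PathAlg k V (E ⊕ F) (Sum.elim s sF) (Sum.elim t tF) :=
  RingQuot.liftAlgHom k ⟨FreeAlgebra.lift k (fun x => match x with
      | Sum.inl i => RingQuot.mkAlgHom k (PRel k V (E ⊕ F) (Sum.elim s sF) (Sum.elim t tF))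
          (FreeAlgebra.ι k (Sum.inl i))
      | Sum.inr a => RingQuot.mkAlgHom k (PRel k V (E ⊕ F) (Sum.elim s sF) (Sum.elim t tF))
          (FreeAlgebra.ι k (Sum.inr (Sum.inl a)))), by
    intro x y h
    induction h with
    | idem i j =>
        have h2 := RingQuot.mkAlgHom_rel k
          (PRel.idem (k := k) (s := Sum.elim s sF) (t := Sum.elim t tF) i j)
        simp only [map_mul, apply_ite, map_zero, FreeAlgebra.lift_ι_apply] at h2 ⊢
        exact h2
    | unit =>
        have h2 := RingQuot.mkAlgHom_rel k
          (PRel.unit (k := k) (V := V) (E := E ⊕ F) (s := Sum.elim s sF) (t := Sum.elim t tF))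
        simp only [map_sum, map_one, FreeAlgebra.lift_ι_apply] at h2 ⊢
        exact h2
    | arrow_left a =>
        have h2 := RingQuot.mkAlgHom_rel k
          (PRel.arrow_left (k := k) (s := Sum.elim s sF) (t := Sum.elim t tF) (Sum.inl a))
        simp only [map_mul, FreeAlgebra.lift_ι_apply, Sum.elim_inl] at h2 ⊢
        exact h2
    | arrow_right a =>
        have h2 := RingQuot.mkAlgHom_rel k
          (PRel.arrow_right (k := k) (s := Sum.elim s sF) (t := Sum.elim t tF) (Sum.inl a))
        simp only [map_mul, FreeAlgebra.lift_ι_apply, Sum.elim_inl] at h2 ⊢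
        exact h2⟩

/-- The two-sided ideal `⟨I⟩` of `kQ_F` generated by (the image of) `I`. -/
def idealF : TwoSidedIdeal (PathAlg k V (E ⊕ F) (Sum.elim s sF) (Sum.elim t tF)) :=
  TwoSidedIdeal.span (extendPath k s t sF tF '' (I : Set (PathAlg k V E s t)))

/-- The algebra `B_F = kQ_F/⟨I⟩`. -/
abbrev BQAF : Type := BQA k (Sum.elim s sF) (Sum.elim t tF) (idealF k s t sF tF I)

/-- The canonical inclusion `B = kQ/I → B_F = kQ_F/⟨I⟩`. -/
def inclBF : BQA k s t I →ₐ[k] BQAF k s t sF tF I :=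
  RingQuot.liftAlgHom k
    ⟨(bqaMk k (Sum.elim s sF) (Sum.elim t tF) (idealF k s t sF tF I)).comp
        (extendPath k s t sF tF), by
      intro x y h
      exact RingQuot.mkAlgHom_rel k (by
        show _ - _ ∈ idealF k s t sF tF I
        rw [← map_sub]
        exact TwoSidedIdeal.subset_span ⟨x - y, h, rfl⟩)⟩

end NewArrows

end QP

namespace HHlow

open scoped TensorProduct
open TensorProduct

section Homology

variable (k : Type) [CommRing k]
variable (A : Type) [Ring A] [Algebra k A]
variable (Y : Type) [AddCommGroup Y] [Module k Y]
  [Module A Y] [Module Aᵐᵒᵖ Y]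
  [SMulCommClass k A Y] [SMulCommClass k Aᵐᵒᵖ Y]
  [IsScalarTower k A Y] [IsScalarTower k Aᵐᵒᵖ Y]
  [SMulCommClass A Aᵐᵒᵖ Y]
variable {B : Type} [Ring B] [Algebra k B]

/-- The Hochschild boundary `b₁ : Y ⊗ B → Y`, `y ⊗ b ↦ y·b - b·y`, where `B` acts on the
`A`-bimodule `Y` through the algebra morphism `f : B →ₐ[k] A`. -/
noncomputable def hb1 (f : B →ₐ[k] A) : Y ⊗[k] B →ₗ[k] Y :=
  TensorProduct.lift (LinearMap.mk₂ k
    (fun y b => MulOpposite.op (f b) • y - f b • y)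
    (by intro y z b; simp only [smul_add]; abel)
    (by intro c y b; simp only [smul_sub, smul_comm c])
    (by intro y b b'; simp only [map_add, MulOpposite.op_add, add_smul]; abel)
    (by intro c y b; simp only [map_smul, MulOpposite.op_smul, smul_assoc, smul_sub]))

lemma hb1_tmul (f : B →ₐ[k] A) (y : Y) (b : B) :
    hb1 k A Y f (y ⊗ₜ[k] b) = MulOpposite.op (f b) • y - f b • y := by
  simp [hb1]

/-- The Hochschild boundary `b₂ : (Y ⊗ B) ⊗ B → Y ⊗ B`,
`(y ⊗ b) ⊗ b' ↦ (y·b) ⊗ b' - y ⊗ (b·b') + (b'·y) ⊗ b`. -/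
noncomputable def hb2 (f : B →ₐ[k] A) : (Y ⊗[k] B) ⊗[k] B →ₗ[k] Y ⊗[k] B :=
  TensorProduct.lift (TensorProduct.lift
    { toFun := fun y => LinearMap.mk₂ k
        (fun b b' => (MulOpposite.op (f b) • y) ⊗ₜ[k] b' - y ⊗ₜ[k] (b * b')
          + (f b' • y) ⊗ₜ[k] b)
        (by
          intro b c b'
          simp only [map_add, MulOpposite.op_add, add_smul, add_tmul, add_mul, tmul_add]
          abel)
        (by
          intro c b b'
          simp only [map_smul, MulOpposite.op_smul, smul_assoc, smul_tmul', tmul_smul,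
            smul_mul_assoc, smul_sub, smul_add])
        (by
          intro b b' c'
          simp only [map_add, add_smul, add_tmul, mul_add, tmul_add]
          abel)
        (by
          intro c b b'
          simp only [map_smul, smul_assoc, smul_tmul', tmul_smul, mul_smul_comm,
            smul_sub, smul_add])
      map_add' := by
        intro y z
        ext b b'
        simp only [LinearMap.mk₂_apply, LinearMap.add_apply, LinearMap.coe_mk, AddHom.coe_mk,
          smul_add, add_tmul, tmul_add]
        abel
      map_smul' := by
        intro c y
        ext b b'
        simp only [LinearMap.mk₂_apply, LinearMap.smul_apply, RingHom.id_apply,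
          LinearMap.coe_mk, AddHom.coe_mk, smul_sub, smul_add, smul_tmul',
          smul_comm c] })

lemma hb2_tmul (f : B →ₐ[k] A) (y : Y) (b b' : B) :
    hb2 k A Y f ((y ⊗ₜ[k] b) ⊗ₜ[k] b') =
      (MulOpposite.op (f b) • y) ⊗ₜ[k] b' - y ⊗ₜ[k] (b * b') + (f b' • y) ⊗ₜ[k] b := by
  simp [hb2]

/-- The first Hochschild homology `H_1(B, Y)` of `B` with coefficients in the `A`-bimodule
`Y`, `B` acting through `f : B →ₐ[k] A`: the homology of
`Y ⊗ B ⊗ B → Y ⊗ B → Y` at `Y ⊗ B`. -/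
noncomputable def H1h (f : B →ₐ[k] A) :=
  LinearMap.ker (hb1 k A Y f) ⧸
    (LinearMap.range (hb2 k A Y f)).comap (LinearMap.ker (hb1 k A Y f)).subtype

noncomputable instance (f : B →ₐ[k] A) : AddCommGroup (H1h k A Y f) :=
  inferInstanceAs (AddCommGroup (_ ⧸ _))

noncomputable instance (f : B →ₐ[k] A) : Module k (H1h k A Y f) :=
  inferInstanceAs (Module k (_ ⧸ _))

end Homology

section Functorial

variable (k : Type) [CommRing k]
variable (A : Type) [Ring A] [Algebra k A]
variable (Y : Type) [AddCommGroup Y] [Module k Y]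
  [Module A Y] [Module Aᵐᵒᵖ Y]
  [SMulCommClass k A Y] [SMulCommClass k Aᵐᵒᵖ Y]
  [IsScalarTower k A Y] [IsScalarTower k Aᵐᵒᵖ Y]
  [SMulCommClass A Aᵐᵒᵖ Y]
variable (A' : Type) [Ring A'] [Algebra k A']
variable (Y' : Type) [AddCommGroup Y'] [Module k Y']
  [Module A' Y'] [Module A'ᵐᵒᵖ Y']
  [SMulCommClass k A' Y'] [SMulCommClass k A'ᵐᵒᵖ Y']
  [IsScalarTower k A' Y'] [IsScalarTower k A'ᵐᵒᵖ Y']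
  [SMulCommClass A' A'ᵐᵒᵖ Y']
variable {B B' : Type} [Ring B] [Algebra k B] [Ring B'] [Algebra k B']
variable (f : B →ₐ[k] A) (f' : B' →ₐ[k] A') (g : B →ₐ[k] B') (u : Y →ₗ[k] Y')

/-- The chain map `Y ⊗ B → Y' ⊗ B'` induced by `g` and `u`. -/
noncomputable def chain1 : Y ⊗[k] B →ₗ[k] Y' ⊗[k] B' :=
  TensorProduct.map u (g.toLinearMap : B →ₗ[k] B')

lemma chain1_comm
    (hl : ∀ (b : B) (y : Y), u (f b • y) = f' (g b) • u y)
    (hr : ∀ (b : B) (y : Y), u (MulOpposite.op (f b) • y) = MulOpposite.op (f' (g b)) • u y) :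
    (hb1 k A' Y' f').comp (chain1 k Y Y' g u) = u.comp (hb1 k A Y f) := by
  apply TensorProduct.ext'
  intro y b
  simp [chain1, hb1_tmul, map_sub, hl, hr]

lemma chain2_comm
    (hl : ∀ (b : B) (y : Y), u (f b • y) = f' (g b) • u y)
    (hr : ∀ (b : B) (y : Y), u (MulOpposite.op (f b) • y) = MulOpposite.op (f' (g b)) • u y) :
    (chain1 k Y Y' g u).comp (hb2 k A Y f) =
      (hb2 k A' Y' f').comp (TensorProduct.map (chain1 k Y Y' g u) g.toLinearMap) := by
  apply TensorProduct.ext'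
  intro x b'
  induction x using TensorProduct.induction_on with
  | zero => simp
  | tmul y b =>
      simp only [LinearMap.comp_apply, TensorProduct.map_tmul, hb2_tmul, chain1, map_sub,
        map_add, TensorProduct.map_tmul, AlgHom.toLinearMap_apply, map_mul, hl, hr]
  | add v w hv hw =>
      simp only [TensorProduct.add_tmul, map_add] at *
      rw [hv, hw]

/-- The map `H_1(B, Y) → H_1(B', Y')` induced by the compatible pair `(g, u)`. -/
noncomputable def H1hMap
    (hl : ∀ (b : B) (y : Y), u (f b • y) = f' (g b) • u y)
    (hr : ∀ (b : B) (y : Y), u (MulOpposite.op (f b) • y) = MulOpposite.op (f' (g b)) • u y) :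
    H1h k A Y f →ₗ[k] H1h k A' Y' f' :=
  Submodule.mapQ _ _
    ((chain1 k Y Y' g u).restrict (p := LinearMap.ker (hb1 k A Y f))
      (q := LinearMap.ker (hb1 k A' Y' f')) (by
        intro x hx
        have h := LinearMap.congr_fun (chain1_comm k A Y A' Y' f f' g u hl hr) x
        simp only [LinearMap.comp_apply] at h
        simp only [LinearMap.mem_ker] at hx ⊢
        rw [h, hx, map_zero]))
    (by
      rintro ⟨x, hx⟩ ⟨z, hz⟩
      refine ⟨TensorProduct.map (chain1 k Y Y' g u) g.toLinearMap z, ?_⟩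
      have h := LinearMap.congr_fun (chain2_comm k A Y A' Y' f f' g u hl hr) z
      simp only [LinearMap.comp_apply] at h
      rw [← h, hz]
      rfl)

end Functorial

end HHlow


/-!
Over a field, `H_1(B, Y) → H_1(B_F, Y)` is injective as soon as every derivation
`B → Y* = Hom_k(Y, k)` (with `B` acting through the inclusion) is the restriction of a derivation
`B_F → Y*`: a functional on `Y ⊗ B` vanishing on the boundaries is exactly such a derivation.
After subtracting an inner derivation, a derivation `D` of `B` vanishes on the vertex idempotents.
Then the algebra map `b ↦ (b, D b)` from `B` to the trivial square-zero extension `B_F ⋉ Y*`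
extends to `B_F` by sending each new arrow `a` to `(a, 0)`, because `B_F` is generated over `B` by
the new arrows subject only to `e_{t a} a = a = a e_{s a}`. The second component of this
extension is the required derivation of `B_F`.
-/

namespace HHlow

open MulOpposite
open scoped TensorProduct

section Derivations

variable {k : Type} [CommRing k] {A B C : Type} [Ring A] [Algebra k A] [Ring B] [Algebra k B]
  [Ring C] [Algebra k C]
variable {M : Type} [AddCommGroup M] [Module k M] [Module A M] [Module Aᵐᵒᵖ M]
  [SMulCommClass A Aᵐᵒᵖ M] [IsScalarTower k A M] [IsScalarTower k Aᵐᵒᵖ M]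

def IsDerivationAlong (ι : B →ₐ[k] A) (D : B →ₗ[k] M) : Prop :=
  ∀ b b', D (b * b') = ι b • D b' + op (ι b') • D b

def innerDerivation (ι : B →ₐ[k] A) (m : M) : B →ₗ[k] M where
  toFun b := ι b • m - op (ι b) • m
  map_add' b b' := by simp only [map_add, MulOpposite.op_add, add_smul]; abel
  map_smul' c b := by simp only [map_smul, op_smul, smul_assoc, RingHom.id_apply, smul_sub]

variable (M) in
def DerivationsExtendAlong (ι : B →ₐ[k] A) : Prop :=
  ∀ D : B →ₗ[k] M, IsDerivationAlong ι D →
    ∃ G : A →ₗ[k] M, IsDerivationAlong (AlgHom.id k A) G ∧ G ∘ₗ ι.toLinearMap = D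

variable {ι : B →ₐ[k] A} {D D' : B →ₗ[k] M}

theorem isDerivationAlong_innerDerivation (m : M) :
    IsDerivationAlong ι (innerDerivation ι m) := by
  intro b b'
  simp only [innerDerivation, LinearMap.coe_mk, AddHom.coe_mk, map_mul, op_mul, mul_smul,
    smul_sub, smul_comm (ι b) (op (ι b'))]
  abel

theorem IsDerivationAlong.add (hD : IsDerivationAlong ι D) (hD' : IsDerivationAlong ι D') :
    IsDerivationAlong ι (D + D') := by
  intro b b'
  simp only [LinearMap.add_apply, hD b b', hD' b b', smul_add]
  abel

theorem IsDerivationAlong.sub (hD : IsDerivationAlong ι D) (hD' : IsDerivationAlong ι D') :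
    IsDerivationAlong ι (D - D') := by
  intro b b'
  simp only [LinearMap.sub_apply, hD b b', hD' b b', smul_sub]
  abel

theorem IsDerivationAlong.map_one_eq_zero (hD : IsDerivationAlong ι D) : D 1 = 0 := by
  simpa using hD 1 1

def IsDerivationAlong.toAlgHom (hD : IsDerivationAlong ι D) : B →ₐ[k] TrivSqZeroExt A M where
  toFun b := TrivSqZeroExt.inl (ι b) + TrivSqZeroExt.inr (D b)
  map_one' := by simp [hD.map_one_eq_zero]
  map_mul' b b' := by ext <;> simp [hD b b']
  map_zero' := by simp
  map_add' b b' := by ext <;> simp [add_add_add_comm]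
  commutes' c := by
    ext <;> simp [Algebra.algebraMap_eq_smul_one, hD.map_one_eq_zero]

@[simp]
theorem IsDerivationAlong.fst_toAlgHom (hD : IsDerivationAlong ι D) (b : B) :
    (hD.toAlgHom b).fst = ι b := by
  simp [toAlgHom]

@[simp]
theorem IsDerivationAlong.snd_toAlgHom (hD : IsDerivationAlong ι D) (b : B) :
    (hD.toAlgHom b).snd = D b := by
  simp [toAlgHom]

theorem isDerivationAlong_sndHom_comp (ρ : C →ₐ[k] TrivSqZeroExt A M) :
    IsDerivationAlong ((TrivSqZeroExt.fstHom k A M).comp ρ)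
      ((TrivSqZeroExt.sndHom A M).restrictScalars k ∘ₗ ρ.toLinearMap) := by
  intro c c'
  simp [TrivSqZeroExt.snd_mul]

theorem IsDerivationAlong.exists_eq_innerDerivation_on_idempotents {V : Type} [Fintype V]
    (hD : IsDerivationAlong ι D) {e : V → B} (he : CompleteOrthogonalIdempotents e) :
    ∃ m : M, ∀ v, D (e v) = innerDerivation ι m (e v) := by
  classical
  refine ⟨∑ v, ι (e v) • D (e v), fun u => ?_⟩
  have hleft : ι (e u) • ∑ v, ι (e v) • D (e v) = ι (e u) • D (e u) := by
    simp [Finset.smul_sum, smul_smul, ← map_mul, he.mul_eq, apply_ite ι, ite_smul]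
  have hright : op (ι (e u)) • ∑ v, ι (e v) • D (e v) = ι (e u) • D (e u) - D (e u) := by
    have key : ∀ v, op (ι (e u)) • ι (e v) • D (e v)
        = ι (e v) • D (e v * e u) - ι (e v) • D (e u) := by
      intro v
      rw [← smul_comm (ι (e v)), hD, smul_add, smul_smul, ← map_mul, (he.idem v).eq]
      abel
    rw [Finset.smul_sum, Finset.sum_congr rfl fun v _ => key v, Finset.sum_sub_distrib,
      ← Finset.sum_smul, ← map_sum, he.complete, map_one, one_smul]
    simp [he.mul_eq, apply_ite D]
  simp only [innerDerivation, LinearMap.coe_mk, AddHom.coe_mk, hleft, hright]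
  abel

end Derivations

section DualBimodule

variable {k : Type} [CommRing k] {A : Type} [Ring A] [Algebra k A]
  {Y : Type} [AddCommGroup Y] [Module k Y] [Module A Y] [Module Aᵐᵒᵖ Y]

/-- The dual `Hom_k(Y, k)` of an `A`-bimodule `Y` is an `A`-bimodule:
`(a • ξ • a') y = ξ (a' • y • a)`. -/
instance [SMulCommClass k Aᵐᵒᵖ Y] : SMul A (Module.Dual k Y) :=
  ⟨fun a ξ => ξ ∘ₗ
    { toFun := (op a • ·)
      map_add' := smul_add _
      map_smul' := fun c y => (smul_comm c (op a) y).symm }⟩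

instance [SMulCommClass k A Y] : SMul Aᵐᵒᵖ (Module.Dual k Y) :=
  ⟨fun a ξ => ξ ∘ₗ
    { toFun := (unop a • ·)
      map_add' := smul_add _
      map_smul' := fun c y => (smul_comm c (unop a) y).symm }⟩

@[simp]
theorem dual_smul_apply [SMulCommClass k Aᵐᵒᵖ Y] (a : A) (ξ : Module.Dual k Y) (y : Y) :
    (a • ξ) y = ξ (op a • y) :=
  rfl

@[simp]
theorem dual_op_smul_apply [SMulCommClass k A Y] (a : Aᵐᵒᵖ) (ξ : Module.Dual k Y) (y : Y) :
    (a • ξ) y = ξ (unop a • y) :=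
  rfl

instance [SMulCommClass k Aᵐᵒᵖ Y] : Module A (Module.Dual k Y) where
  one_smul ξ := by ext; simp
  mul_smul a a' ξ := by ext; simp [mul_smul]
  smul_zero a := rfl
  smul_add a ξ ξ' := rfl
  add_smul a a' ξ := by ext; simp [add_smul]
  zero_smul ξ := by ext; simp

instance [SMulCommClass k A Y] : Module Aᵐᵒᵖ (Module.Dual k Y) where
  one_smul ξ := by ext; simp
  mul_smul a a' ξ := by ext; simp [mul_smul]
  smul_zero a := rfl
  smul_add a ξ ξ' := rfl
  add_smul a a' ξ := by ext; simp [add_smul]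
  zero_smul ξ := by ext; simp

instance [SMulCommClass k A Y] [SMulCommClass k Aᵐᵒᵖ Y] [SMulCommClass A Aᵐᵒᵖ Y] :
    SMulCommClass A Aᵐᵒᵖ (Module.Dual k Y) :=
  ⟨fun a a' ξ => by ext; simp [smul_comm]⟩

instance [SMulCommClass k Aᵐᵒᵖ Y] [IsScalarTower k Aᵐᵒᵖ Y] :
    IsScalarTower k A (Module.Dual k Y) :=
  ⟨fun c a ξ => by ext; simp⟩

instance [SMulCommClass k A Y] [IsScalarTower k A Y] :
    IsScalarTower k Aᵐᵒᵖ (Module.Dual k Y) :=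
  ⟨fun c a ξ => by ext; simp⟩

end DualBimodule

section Duality

variable {k : Type} [CommRing k] {A B : Type} [Ring A] [Algebra k A] [Ring B] [Algebra k B]
variable {Y : Type} [AddCommGroup Y] [Module k Y] [Module A Y] [Module Aᵐᵒᵖ Y]
  [SMulCommClass k A Y] [SMulCommClass k Aᵐᵒᵖ Y]
  [IsScalarTower k A Y] [IsScalarTower k Aᵐᵒᵖ Y]
  [SMulCommClass A Aᵐᵒᵖ Y]

theorem comp_hb2_eq_zero_iff (ι : B →ₐ[k] A) (f : Y ⊗[k] B →ₗ[k] k) :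
    f ∘ₗ hb2 k A Y ι = 0 ↔ IsDerivationAlong ι (TensorProduct.curry f).flip := by
  constructor
  · intro hf b b'
    ext y
    have h := LinearMap.congr_fun hf ((y ⊗ₜ[k] b) ⊗ₜ[k] b')
    simp only [LinearMap.comp_apply, hb2_tmul, map_add, map_sub, LinearMap.zero_apply] at h
    simp only [LinearMap.flip_apply, TensorProduct.curry_apply, LinearMap.add_apply,
      dual_smul_apply, dual_op_smul_apply, unop_op]
    linear_combination -h
  · intro hD
    apply TensorProduct.ext'
    intro x b'
    induction x using TensorProduct.induction_on with
    | zero => simp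
    | tmul y b =>
      have h := LinearMap.congr_fun (hD b b') y
      simp only [LinearMap.flip_apply, TensorProduct.curry_apply, LinearMap.add_apply,
        dual_smul_apply, dual_op_smul_apply, unop_op] at h
      simp only [LinearMap.comp_apply, hb2_tmul, map_add, map_sub, LinearMap.zero_apply]
      linear_combination -h
    | add x x' hx hx' =>
      simp only [LinearMap.comp_apply, LinearMap.zero_apply, TensorProduct.add_tmul,
        map_add] at hx hx' ⊢
      rw [hx, hx', add_zero]

end Duality

section FieldDuality

variable {k : Type} [Field k] {A B : Type} [Ring A] [Algebra k A] [Ring B] [Algebra k B]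
variable {Y : Type} [AddCommGroup Y] [Module k Y] [Module A Y] [Module Aᵐᵒᵖ Y]
  [SMulCommClass k A Y] [SMulCommClass k Aᵐᵒᵖ Y]
  [IsScalarTower k A Y] [IsScalarTower k Aᵐᵒᵖ Y]
  [SMulCommClass A Aᵐᵒᵖ Y]

theorem mem_range_hb2_of_chain1_mem_range (ι : B →ₐ[k] A)
    (hext : DerivationsExtendAlong (Module.Dual k Y) ι)
    {x : Y ⊗[k] B}
    (hx : chain1 k Y Y ι LinearMap.id x ∈ LinearMap.range (hb2 k A Y (AlgHom.id k A))) :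
    x ∈ LinearMap.range (hb2 k A Y ι) := by
  by_contra hxB
  obtain ⟨f, hfx, hf⟩ :=
    Submodule.exists_dual_map_eq_bot_of_notMem hxB Module.Projective.of_free
  rw [← LinearMap.range_comp, LinearMap.range_eq_bot] at hf
  obtain ⟨G, hG, hGι⟩ := hext _ ((comp_hb2_eq_zero_iff ι f).1 hf)
  set F : Y ⊗[k] A →ₗ[k] k := TensorProduct.lift G.flip
  have hF : F ∘ₗ hb2 k A Y (AlgHom.id k A) = 0 := (comp_hb2_eq_zero_iff _ F).2 hG
  have hfF : f = F ∘ₗ chain1 k Y Y ι LinearMap.id := by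
    apply TensorProduct.ext'
    intro y b
    simpa [F, chain1] using (LinearMap.congr_fun (LinearMap.congr_fun hGι b) y).symm
  obtain ⟨w, hw⟩ := hx
  apply hfx
  rw [hfF, LinearMap.comp_apply, ← hw, ← LinearMap.comp_apply, hF, LinearMap.zero_apply]

theorem H1hMap_injective_of_derivationsExtendAlong (ι : B →ₐ[k] A)
    (hext : DerivationsExtendAlong (Module.Dual k Y) ι) :
    Function.Injective
      (H1hMap k A Y A Y ι (AlgHom.id k A) ι LinearMap.id (fun _ _ => rfl) (fun _ _ => rfl)) := by
  show Function.Injective (Submodule.mapQ _ _ _ _)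
  rw [← LinearMap.ker_eq_bot, eq_bot_iff, Submodule.ker_mapQ, Submodule.map_le_iff_le_comap,
    Submodule.comap_bot, Submodule.ker_mkQ]
  rintro ⟨x, _⟩ hx
  exact mem_range_hb2_of_chain1_mem_range ι hext hx

end FieldDuality

end HHlow

namespace QP

open HHlow

section PathAlgebra

variable {k : Type} [CommRing k] {V E : Type} [Fintype V] [DecidableEq V] {s t : E → V}
variable {T : Type} [Semiring T] [Algebra k T]

theorem completeOrthogonalIdempotents_vtx : CompleteOrthogonalIdempotents (vtx k s t) := by
  refine ⟨OrthogonalIdempotents.iff_mul_eq.2 fun i j => ?_, ?_⟩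
  · simpa [vtx, apply_ite] using
      RingQuot.mkAlgHom_rel k (PRel.idem (k := k) (s := s) (t := t) i j)
  · simpa [vtx] using RingQuot.mkAlgHom_rel k (PRel.unit (k := k) (V := V) (s := s) (t := t))

theorem vtx_mul_arr (a : E) : vtx k s t (t a) * arr k s t a = arr k s t a := by
  simpa [vtx, arr] using RingQuot.mkAlgHom_rel k (PRel.arrow_left (k := k) (s := s) (t := t) a)

theorem arr_mul_vtx (a : E) : arr k s t a * vtx k s t (s a) = arr k s t a := by
  simpa [vtx, arr] using RingQuot.mkAlgHom_rel k (PRel.arrow_right (k := k) (s := s) (t := t) a)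

def PathAlg.lift (x : V → T) (y : E → T) (hx : CompleteOrthogonalIdempotents x)
    (ht : ∀ a, x (t a) * y a = y a) (hs : ∀ a, y a * x (s a) = y a) :
    PathAlg k V E s t →ₐ[k] T :=
  RingQuot.liftAlgHom k ⟨FreeAlgebra.lift k (Sum.elim x y), by
    rintro _ _ (⟨i, j⟩ | _ | ⟨a⟩ | ⟨a⟩) <;>
      simp [hx.mul_eq, apply_ite (FreeAlgebra.lift k (Sum.elim x y)), hx.complete, ht, hs]⟩

variable {x : V → T} {y : E → T} {hx : CompleteOrthogonalIdempotents x}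
  {ht : ∀ a, x (t a) * y a = y a} {hs : ∀ a, y a * x (s a) = y a}

@[simp]
theorem PathAlg.lift_vtx (v : V) : PathAlg.lift x y hx ht hs (vtx k s t v) = x v := by
  simp [PathAlg.lift, vtx]

@[simp]
theorem PathAlg.lift_arr (a : E) : PathAlg.lift x y hx ht hs (arr k s t a) = y a := by
  simp [PathAlg.lift, arr]

theorem PathAlg.algHom_ext {φ ψ : PathAlg k V E s t →ₐ[k] T}
    (hv : ∀ v, φ (vtx k s t v) = ψ (vtx k s t v))
    (ha : ∀ a, φ (arr k s t a) = ψ (arr k s t a)) : φ = ψ :=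
  RingQuot.ringQuot_ext' _ _ _ <| FreeAlgebra.hom_ext <| funext <| Sum.rec hv ha

end PathAlgebra

section BoundQuiverAlgebra

variable {k : Type} [CommRing k] {V E : Type} [Fintype V] [DecidableEq V] {s t : E → V}
  {I : TwoSidedIdeal (PathAlg k V E s t)}
variable {T : Type} [Ring T] [Algebra k T]

variable (k s t I) in
def barr (a : E) : BQA k s t I := bqaMk k s t I (arr k s t a)

theorem completeOrthogonalIdempotents_bv : CompleteOrthogonalIdempotents (bv k s t I) :=
  completeOrthogonalIdempotents_vtx.map (bqaMk k s t I).toRingHom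

theorem bv_mul_barr (a : E) : bv k s t I (t a) * barr k s t I a = barr k s t I a := by
  rw [bv, barr, ← map_mul, vtx_mul_arr]

theorem barr_mul_bv (a : E) : barr k s t I a * bv k s t I (s a) = barr k s t I a := by
  rw [bv, barr, ← map_mul, arr_mul_vtx]

theorem bqaMk_eq_zero_of_mem {z : PathAlg k V E s t} (hz : z ∈ I) : bqaMk k s t I z = 0 := by
  simpa [bqaMk] using RingQuot.mkAlgHom_rel k
    (s := fun x y : PathAlg k V E s t => x - y ∈ I) (show z - 0 ∈ I by simpa using hz)

def BQA.lift (φ : PathAlg k V E s t →ₐ[k] T) (hφ : ∀ z ∈ I, φ z = 0) :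
    BQA k s t I →ₐ[k] T :=
  RingQuot.liftAlgHom k ⟨φ, fun z z' h => sub_eq_zero.1 (by rw [← map_sub]; exact hφ _ h)⟩

@[simp]
theorem BQA.lift_bqaMk (φ : PathAlg k V E s t →ₐ[k] T) (hφ : ∀ z ∈ I, φ z = 0)
    (z : PathAlg k V E s t) : BQA.lift φ hφ (bqaMk k s t I z) = φ z :=
  RingQuot.liftAlgHom_mkAlgHom_apply _ _ _ _

theorem BQA.algHom_ext {φ ψ : BQA k s t I →ₐ[k] T}
    (hv : ∀ v, φ (bv k s t I v) = ψ (bv k s t I v))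
    (ha : ∀ a, φ (barr k s t I a) = ψ (barr k s t I a)) : φ = ψ :=
  RingQuot.ringQuot_ext' _ _ _ <| PathAlg.algHom_ext hv ha

end BoundQuiverAlgebra

section NewArrows

variable {k : Type} [CommRing k] {V E : Type} [Fintype V] [DecidableEq V] {s t : E → V}
  {F : Type} [Fintype F] {sF tF : F → V} {I : TwoSidedIdeal (PathAlg k V E s t)}
variable {T : Type} [Ring T] [Algebra k T]

@[simp]
theorem extendPath_vtx (v : V) :
    extendPath k s t sF tF (vtx k s t v) = vtx k (Sum.elim s sF) (Sum.elim t tF) v := by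
  simp [extendPath, vtx]

@[simp]
theorem extendPath_arr (a : E) :
    extendPath k s t sF tF (arr k s t a) = arr k (Sum.elim s sF) (Sum.elim t tF) (Sum.inl a) := by
  simp [extendPath, arr]

@[simp]
theorem inclBF_bv (v : V) :
    inclBF k s t sF tF I (bv k s t I v)
      = bv k (Sum.elim s sF) (Sum.elim t tF) (idealF k s t sF tF I) v := by
  simp [inclBF, bv, bqaMk]

@[simp]
theorem inclBF_barr (a : E) :
    inclBF k s t sF tF I (barr k s t I a)
      = barr k (Sum.elim s sF) (Sum.elim t tF) (idealF k s t sF tF I) (Sum.inl a) := by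
  simp [inclBF, barr, bqaMk]

def liftPathBF (φ : BQA k s t I →ₐ[k] T) (y : F → T)
    (ht : ∀ a, φ (bv k s t I (tF a)) * y a = y a)
    (hs : ∀ a, y a * φ (bv k s t I (sF a)) = y a) :
    PathAlg k V (E ⊕ F) (Sum.elim s sF) (Sum.elim t tF) →ₐ[k] T :=
  PathAlg.lift (fun v => φ (bv k s t I v)) (Sum.elim (fun a => φ (barr k s t I a)) y)
    (completeOrthogonalIdempotents_bv.map φ.toRingHom)
    (by
      rintro (a | a)
      · exact (map_mul φ _ _).symm.trans (congrArg φ (bv_mul_barr a))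
      · exact ht a)
    (by
      rintro (a | a)
      · exact (map_mul φ _ _).symm.trans (congrArg φ (barr_mul_bv a))
      · exact hs a)

variable {φ : BQA k s t I →ₐ[k] T} {y : F → T}
  {ht : ∀ a, φ (bv k s t I (tF a)) * y a = y a} {hs : ∀ a, y a * φ (bv k s t I (sF a)) = y a}

theorem liftPathBF_comp_extendPath :
    (liftPathBF φ y ht hs).comp (extendPath k s t sF tF) = φ.comp (bqaMk k s t I) :=
  PathAlg.algHom_ext (fun v => by simp [liftPathBF, bv]) (fun a => by simp [liftPathBF, barr])

theorem liftPathBF_eq_zero_of_mem_idealF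
    {z : PathAlg k V (E ⊕ F) (Sum.elim s sF) (Sum.elim t tF)} (hz : z ∈ idealF k s t sF tF I) :
    liftPathBF φ y ht hs z = 0 := by
  refine (TwoSidedIdeal.mem_ker _).1 (TwoSidedIdeal.mem_span_iff.1 hz _ ?_)
  rintro _ ⟨z, hzI, rfl⟩
  rw [SetLike.mem_coe, TwoSidedIdeal.mem_ker, ← AlgHom.comp_apply, liftPathBF_comp_extendPath,
    AlgHom.comp_apply, bqaMk_eq_zero_of_mem hzI, map_zero]

variable (φ y ht hs) in
def liftBF : BQAF k s t sF tF I →ₐ[k] T :=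
  BQA.lift (liftPathBF φ y ht hs) fun _ => liftPathBF_eq_zero_of_mem_idealF

@[simp]
theorem liftBF_inclBF (b : BQA k s t I) : liftBF φ y ht hs (inclBF k s t sF tF I b) = φ b := by
  have h : (liftBF φ y ht hs).comp (inclBF k s t sF tF I) = φ :=
    BQA.algHom_ext
      (fun v => by rw [AlgHom.comp_apply, inclBF_bv]; simp [liftBF, liftPathBF, bv])
      (fun a => by rw [AlgHom.comp_apply, inclBF_barr]; simp [liftBF, liftPathBF, barr])
  exact AlgHom.congr_fun h b

@[simp]
theorem liftBF_barr_inr (a : F) :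
    liftBF φ y ht hs (barr k (Sum.elim s sF) (Sum.elim t tF) (idealF k s t sF tF I) (Sum.inr a))
      = y a := by
  simp [liftBF, liftPathBF, barr]

theorem BQAF.algHom_ext {ψ ψ' : BQAF k s t sF tF I →ₐ[k] T}
    (hB : ψ.comp (inclBF k s t sF tF I) = ψ'.comp (inclBF k s t sF tF I))
    (hF : ∀ a, ψ (barr k (Sum.elim s sF) (Sum.elim t tF) (idealF k s t sF tF I) (Sum.inr a))
      = ψ' (barr k (Sum.elim s sF) (Sum.elim t tF) (idealF k s t sF tF I) (Sum.inr a))) :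
    ψ = ψ' := by
  refine BQA.algHom_ext (fun v => ?_) (Sum.rec (fun a => ?_) hF)
  · simpa using AlgHom.congr_fun hB (bv k s t I v)
  · simpa using AlgHom.congr_fun hB (barr k s t I a)

end NewArrows

section DerivationExtension

variable {k : Type} [CommRing k] {V E : Type} [Fintype V] [DecidableEq V] {s t : E → V}
  {F : Type} [Fintype F] {sF tF : F → V} {I : TwoSidedIdeal (PathAlg k V E s t)}
variable {M : Type} [AddCommGroup M] [Module k M]
  [Module (BQAF k s t sF tF I) M] [Module (BQAF k s t sF tF I)ᵐᵒᵖ M]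
  [SMulCommClass (BQAF k s t sF tF I) (BQAF k s t sF tF I)ᵐᵒᵖ M]
  [IsScalarTower k (BQAF k s t sF tF I) M] [IsScalarTower k (BQAF k s t sF tF I)ᵐᵒᵖ M]

/-- The extension vanishes on the new arrows. -/
theorem exists_derivation_extension_of_map_bv_eq_zero {D : BQA k s t I →ₗ[k] M}
    (hD : IsDerivationAlong (inclBF k s t sF tF I) D) (hv : ∀ v, D (bv k s t I v) = 0) :
    ∃ G : BQAF k s t sF tF I →ₗ[k] M,
      IsDerivationAlong (AlgHom.id k _) G ∧ G ∘ₗ (inclBF k s t sF tF I).toLinearMap = D := by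
  have hτv : ∀ v, hD.toAlgHom (bv k s t I v) = TrivSqZeroExt.inl (bv k _ _ _ v) := fun v => by
    ext <;> simp [hv]
  let ρ := liftBF (sF := sF) (tF := tF) hD.toAlgHom
    (fun a => TrivSqZeroExt.inl (barr k _ _ (idealF k s t sF tF I) (Sum.inr a)))
    (fun a => by rw [hτv, TrivSqZeroExt.inl_mul_inl]; exact congrArg _ (bv_mul_barr (Sum.inr a)))
    (fun a => by rw [hτv, TrivSqZeroExt.inl_mul_inl]; exact congrArg _ (barr_mul_bv (Sum.inr a)))
  have hρ : (TrivSqZeroExt.fstHom k _ M).comp ρ = AlgHom.id k _ :=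
    BQAF.algHom_ext (AlgHom.ext fun b => by simp [ρ]) (fun a => by simp [ρ])
  refine ⟨_, hρ ▸ isDerivationAlong_sndHom_comp ρ, ?_⟩
  ext b
  simp [ρ]

theorem derivationsExtendAlong_inclBF : DerivationsExtendAlong M (inclBF k s t sF tF I) := by
  intro D hD
  obtain ⟨m, hm⟩ := hD.exists_eq_innerDerivation_on_idempotents completeOrthogonalIdempotents_bv
  obtain ⟨G, hG, hGD⟩ := exists_derivation_extension_of_map_bv_eq_zero
    (hD.sub (isDerivationAlong_innerDerivation m)) (fun v => sub_eq_zero.2 (hm v))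
  refine ⟨G + innerDerivation (AlgHom.id k _) m,
    hG.add (isDerivationAlong_innerDerivation m), ?_⟩
  rw [LinearMap.add_comp, hGD]
  ext b
  simp [innerDerivation]

end DerivationExtension

end QP

section
variable (k : Type) [Field k]
variable {V E : Type} [Fintype V] [DecidableEq V] [Fintype E] (s t : E → V)
variable {F : Type} [Fintype F] (sF tF : F → V)
variable (I : TwoSidedIdeal (QP.PathAlg k V E s t))

theorem H1_homology_map_of_inclusion_injective
    (Y : Type) [AddCommGroup Y] [Module k Y]
    [Module (QP.BQAF k s t sF tF I) Y] [Module (QP.BQAF k s t sF tF I)ᵐᵒᵖ Y]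
    [SMulCommClass k (QP.BQAF k s t sF tF I) Y]
    [SMulCommClass k (QP.BQAF k s t sF tF I)ᵐᵒᵖ Y]
    [IsScalarTower k (QP.BQAF k s t sF tF I) Y]
    [IsScalarTower k (QP.BQAF k s t sF tF I)ᵐᵒᵖ Y]
    [SMulCommClass (QP.BQAF k s t sF tF I) (QP.BQAF k s t sF tF I)ᵐᵒᵖ Y] :
    Function.Injective
      (HHlow.H1hMap k (QP.BQAF k s t sF tF I) Y (QP.BQAF k s t sF tF I) Y
        (QP.inclBF k s t sF tF I) (AlgHom.id k (QP.BQAF k s t sF tF I))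
        (QP.inclBF k s t sF tF I) LinearMap.id
        (fun b y => rfl) (fun b y => rfl)) :=
  HHlow.H1hMap_injective_of_derivationsExtendAlong _ QP.derivationsExtendAlong_inclBF

end
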